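/- arXiv:1308.4104 — 4 statements merged into one kernel-verified Lean document; each statement's English description precedes it below -/
import Mathlib

section
/- Let V be a vector space over a field k of characteristic 0, and let μ₋, μ₊ ∈ End(V) satisfy [μ₋, μ₊] = id and assume μ₋ is locally nilpotent. Then the natural map (ker μ₋) ⊗ k[μ₊] → V, sending w ⊗ tⁱ to μ₊ⁱ(w), is a linear isomorphism. -/
section Aux

variable {k V : Type*} [Field k] [CharZero k] [AddCommGroup V] [Module k V]
  (μm μp : Module.End k V)

lemma heis_commute (h : μm * μp - μp * μm = 1) (x : V) : μm (μp x) = μp (μm x) + x := by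
  have := congrArg (fun e : Module.End k V => e x) h
  simp only [LinearMap.sub_apply, Module.End.mul_apply, Module.End.one_apply] at this
  rw [sub_eq_iff_eq_add'] at this
  exact this

lemma heis_pow_ker (h : μm * μp - μp * μm = 1) (w : V) (hw : μm w = 0) :
    ∀ i : ℕ, μm ((μp ^ i) w) = i • (μp ^ (i - 1)) w := by
  intro i
  induction i with
  | zero => simpa using hw
  | succ j ih =>
    have h1 : (μp ^ (j + 1)) w = μp ((μp ^ j) w) := by
      rw [pow_succ'] ; rfl
    rw [h1, heis_commute μm μp h, ih]
    cases j with
    | zero => simp [hw]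
    | succ m =>
      have h2 : μp ((μp ^ m) w) = (μp ^ (m + 1)) w := by
        rw [pow_succ'] ; rfl
      simp only [Nat.add_sub_cancel, succ_nsmul, map_add, map_nsmul, h2]
      try abel

lemma heis_pow_pow_ker (h : μm * μp - μp * μm = 1) (w : V) (hw : μm w = 0) :
    ∀ (j i : ℕ), (μm ^ j) ((μp ^ i) w) = (Nat.descFactorial i j) • (μp ^ (i - j)) w := by
  intro j
  induction j with
  | zero => simp
  | succ n ih =>
    intro i
    have h1 : (μm ^ (n + 1)) ((μp ^ i) w) = μm ((μm ^ n) ((μp ^ i) w)) := by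
      rw [pow_succ'] ; rfl
    rw [h1, ih i, map_nsmul, heis_pow_ker μm μp h w hw, Nat.descFactorial_succ]
    rw [smul_smul, Nat.mul_comm]
    have hsub : i - n - 1 = i - (n + 1) := by omega
    rw [hsub]

end Aux

theorem heisenberg_natural_map_bijective
    {k V : Type*} [Field k] [CharZero k] [AddCommGroup V] [Module k V]
    (μm μp : Module.End k V) (h : μm * μp - μp * μm = 1)
    (hnil : ∀ v : V, ∃ n : ℕ, (μm ^ n) v = 0) :
    Function.Bijective
      (fun f : ℕ →₀ (LinearMap.ker μm) =>
        f.sum fun i w => (μp ^ i) (w : V)) := by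
  set K := LinearMap.ker μm with hK
  set L : (ℕ →₀ K) →ₗ[k] V :=
    Finsupp.lsum k (fun i => (μp ^ i) ∘ₗ K.subtype) with hL
  have hLapp : ∀ f : ℕ →₀ K, L f = f.sum fun i w => (μp ^ i) (w : V) := by
    intro f; simp [hL, Finsupp.lsum_apply]; rfl
  have hfun : (fun f : ℕ →₀ K => f.sum fun i w => (μp ^ i) (w : V)) = ⇑L := by
    funext f; rw [hLapp]
  rw [hfun]
  constructor
  · -- injective
    rw [← LinearMap.ker_eq_bot, LinearMap.ker_eq_bot']
    intro f hf
    by_contra hne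
    have hsupp : f.support.Nonempty := Finsupp.support_nonempty_iff.mpr hne
    set N := f.support.max' hsupp with hN
    have hmem : N ∈ f.support := f.support.max'_mem hsupp
    have hmax : ∀ i ∈ f.support, i ≤ N := fun i hi => f.support.le_max' i hi
    have hcalc : (μm ^ N) (L f) = N.factorial • ((f N : V)) := by
      rw [hLapp, map_finsuppSum]
      rw [Finsupp.sum]
      rw [Finset.sum_eq_single N]
      · have := heis_pow_pow_ker μm μp h (f N : V) (f N).2 N N
        simpa [Nat.descFactorial_self] using this
      · intro i hi hiN
        have hlt : i < N := lt_of_le_of_ne (hmax i hi) hiN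
        rw [heis_pow_pow_ker μm μp h (f i : V) (f i).2 N i]
        rw [Nat.descFactorial_eq_zero_iff_lt.mpr hlt]
        simp
      · intro hN'; exact absurd hmem hN'
    rw [hf, map_zero] at hcalc
    have hfz : (f N : V) = 0 := by
      have hfac : (N.factorial : k) ≠ 0 := Nat.cast_ne_zero.mpr N.factorial_ne_zero
      have : (N.factorial : k) • (f N : V) = 0 := by
        rw [Nat.cast_smul_eq_nsmul]; exact hcalc.symm
      exact (smul_eq_zero.mp this).resolve_left hfac
    have : f N = 0 := Subtype.ext hfz
    exact (Finsupp.mem_support_iff.mp hmem) this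
  · -- surjective
    intro v
    obtain ⟨n, hn⟩ := hnil v
    induction n generalizing v with
    | zero => exact ⟨0, by simpa using hn.symm⟩
    | succ n ih =>
      have hn' : (μm ^ n) (μm v) = 0 := by
        rw [← Module.End.mul_apply, ← pow_succ]; exact hn
      obtain ⟨f, hfv⟩ := ih (μm v) hn'
      set g : ℕ →₀ K := f.sum fun i w => Finsupp.single (i + 1) (((i : k) + 1)⁻¹ • w)
        with hg
      have hLg : L g = f.sum fun i w => ((i : k) + 1)⁻¹ • (μp ^ (i + 1)) (w : V) := by
        rw [hg, map_finsuppSum]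
        refine Finsupp.sum_congr ?_
        intro i _
        simp [hL, Finsupp.lsum_single]
      have hmLg : μm (L g) = μm v := by
        rw [hLg, ← hfv, hLapp, map_finsuppSum]
        refine Finsupp.sum_congr ?_
        intro i _
        rw [map_smul, heis_pow_ker μm μp h (f i : V) (f i).2 (i + 1)]
        simp only [Nat.add_sub_cancel]
        rw [← Nat.cast_smul_eq_nsmul k, Nat.cast_add, Nat.cast_one,
          inv_smul_smul₀ (Nat.cast_add_one_ne_zero i)]
      have hker : v - L g ∈ K := by
        have : μm (v - L g) = 0 := by rw [map_sub, hmLg, sub_self]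
        exact this
      refine ⟨g + Finsupp.single 0 ⟨v - L g, hker⟩, ?_⟩
      rw [map_add]
      have : L (Finsupp.single 0 ⟨v - L g, hker⟩) = v - L g := by
        simp [hL, Finsupp.lsum_single]
      rw [this]; exact add_sub_cancel (L g) v
end

section
/- Let V be a vector space over a field k of characteristic 0, and let a₋, a₊, b₋, b₊ ∈ End(V) satisfy [a₋, b₊] = [b₋, a₊] = id, with all other pairs among the four operators commuting ([a₋,a₊] = [b₋,b₊] = [a₋,b₋] = [a₊,b₊] = 0). Assume a₋ and b₋ are locally nilpotent. Let W = ker a₋ ∩ ker b₋. Then the natural map W ⊗ k[b₊, a₊] → V, sending w ⊗ sⁱtʲ to b₊ⁱ a₊ʲ (w), is an isomorphism. -/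
open Finset Nat

section Helpers
variable {k V : Type*} [Field k] [CharZero k] [AddCommGroup V] [Module k V]

/-- truncated "exponential" projector built from a pair with [a,b]=1 -/
noncomputable def QQ (a b : Module.End k V) (N : ℕ) : Module.End k V :=
  ∑ p ∈ Finset.range N, ((-1 : k) ^ p * (p ! : k)⁻¹) • (b ^ p * a ^ p)

variable (a b : Module.End k V)

lemma comm_pow (h : a * b - b * a = 1) (n : ℕ) :
    a * b ^ (n + 1) = b ^ (n + 1) * a + ((n : k) + 1) • b ^ n := by
  induction n with
  | zero =>
    simp only [pow_one, pow_zero, Nat.cast_zero, zero_add, one_smul]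
    exact sub_eq_iff_eq_add'.mp h
  | succ n ih =>
    have hb : a * b = b * a + 1 := sub_eq_iff_eq_add'.mp h
    have hc : ((n + 1 : ℕ) : k) = (n : k) + 1 := by push_cast; ring
    rw [hc]
    calc a * b ^ (n + 1 + 1) = (a * b ^ (n + 1)) * b := by rw [pow_succ, ← mul_assoc]
      _ = (b ^ (n + 1) * a + ((n : k) + 1) • b ^ n) * b := by rw [ih]
      _ = b ^ (n + 1) * (a * b) + ((n : k) + 1) • (b ^ n * b) := by
          rw [add_mul, mul_assoc, smul_mul_assoc]
      _ = b ^ (n + 1) * (b * a) + b ^ (n + 1) + ((n : k) + 1) • b ^ (n + 1) := by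
          rw [hb, mul_add, mul_one, ← pow_succ, add_assoc]
      _ = b ^ (n + 1 + 1) * a + (((n : k) + 1) + 1) • b ^ (n + 1) := by
          rw [← mul_assoc, ← pow_succ]
          module

lemma apow_bpow (h : a * b - b * a = 1) (p : ℕ) :
    ∀ (i : ℕ) (w : V), a w = 0 →
      (a ^ p) ((b ^ i) w) = ((i.descFactorial p : k)) • (b ^ (i - p)) w := by
  induction p with
  | zero => intro i w _; simp
  | succ p ih =>
    intro i w hw
    rw [pow_succ, Module.End.mul_apply]
    cases i with
    | zero =>
      simp only [pow_zero, Module.End.one_apply, hw]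
      rw [map_zero]
      simp [Nat.descFactorial]
    | succ i =>
      have h1 : a ((b ^ (i + 1)) w) = ((i : k) + 1) • (b ^ i) w := by
        have := congrArg (fun (T : Module.End k V) => T w) (comm_pow a b h i)
        simp only [Module.End.mul_apply, LinearMap.add_apply, LinearMap.smul_apply] at this
        rw [this, hw, map_zero, zero_add]
      rw [h1, map_smul, ih i w hw, Nat.succ_descFactorial_succ, Nat.succ_sub_succ]
      push_cast
      rw [smul_smul]

lemma QQ_comm (x : Module.End k V) (hxa : x * a = a * x) (hxb : x * b = b * x) (N : ℕ) :
    x * QQ a b N = QQ a b N * x := by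
  unfold QQ
  rw [Finset.mul_sum, Finset.sum_mul]
  refine Finset.sum_congr rfl fun p _ => ?_
  rw [mul_smul_comm, smul_mul_assoc]
  congr 1
  have ha : Commute x (a ^ p) := (show Commute x a from hxa).pow_right p
  have hbp : Commute x (b ^ p) := (show Commute x b from hxb).pow_right p
  calc x * (b ^ p * a ^ p) = (b ^ p) * (x * a ^ p) := by rw [← mul_assoc, hbp.eq, mul_assoc]
    _ = b ^ p * a ^ p * x := by rw [ha.eq, mul_assoc]

lemma QQ_leftover (h : a * b - b * a = 1) (N : ℕ) (v : V) :
    a ((QQ a b (N + 1)) v) = ((-1 : k) ^ N * (N ! : k)⁻¹) • (b ^ N) ((a ^ (N + 1)) v) := by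
  induction N with
  | zero => simp [QQ]
  | succ N ih =>
    rw [QQ, Finset.sum_range_succ, ← QQ]
    simp only [LinearMap.add_apply, LinearMap.smul_apply, Module.End.mul_apply]
    rw [map_add, ih, map_smul]
    have h1 : a ((b ^ (N + 1)) ((a ^ (N + 1)) v)) =
        (b ^ (N + 1)) ((a ^ (N + 1 + 1)) v) + ((N : k) + 1) • (b ^ N) ((a ^ (N + 1)) v) := by
      have h2 := congrArg (fun T : Module.End k V => T ((a ^ (N + 1)) v)) (comm_pow a b h N)
      simp only [Module.End.mul_apply, LinearMap.add_apply, LinearMap.smul_apply] at h2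
      rw [h2]
      congr 1
      congr 1
      rw [← Module.End.mul_apply]
      congr 1
      exact (pow_succ' a (N + 1)).symm
    rw [h1, smul_add, smul_smul]
    have h2 : (N ! : k) ≠ 0 := Nat.cast_ne_zero.2 N.factorial_ne_zero
    have h3 : ((N : k) + 1) ≠ 0 := by
      have : (((N + 1 : ℕ)) : k) ≠ 0 := Nat.cast_ne_zero.2 (Nat.succ_ne_zero N)
      push_cast at this; exact this
    have hc : ((-1 : k) ^ (N + 1) * ((N + 1)! : k)⁻¹) * ((N : k) + 1)
        = -((-1 : k) ^ N * (N ! : k)⁻¹) := by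
      rw [Nat.factorial_succ, pow_succ]
      push_cast
      rw [mul_inv]
      field_simp
    rw [hc]
    module

lemma QQ_bpow (h : a * b - b * a = 1) (N i : ℕ) (w : V) (hw : a w = 0) (hiN : i < N) :
    (QQ a b N) ((b ^ i) w) = if i = 0 then w else 0 := by
  unfold QQ
  rw [LinearMap.sum_apply]
  have hterm : ∀ p ∈ Finset.range N,
      (((-1 : k) ^ p * (p ! : k)⁻¹) • (b ^ p * a ^ p)) ((b ^ i) w)
        = (((-1 : k) ^ p * (i.choose p : k))) • (b ^ i) w := by
    intro p _
    rw [LinearMap.smul_apply, Module.End.mul_apply, apow_bpow a b h p i w hw]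
    rw [map_smul, ← Module.End.mul_apply, smul_smul]
    have h2 : (p ! : k) ≠ 0 := Nat.cast_ne_zero.2 p.factorial_ne_zero
    rcases le_or_gt p i with hpi | hpi
    · rw [← pow_add, Nat.add_sub_cancel' hpi]
      congr 1
      rw [Nat.descFactorial_eq_factorial_mul_choose]
      push_cast
      rw [mul_assoc]
      congr 1
      rw [← mul_assoc, inv_mul_cancel₀ h2, one_mul]
    · rw [Nat.descFactorial_eq_zero_iff_lt.2 hpi, Nat.choose_eq_zero_of_lt hpi]
      push_cast
      simp
  rw [Finset.sum_congr rfl hterm, ← Finset.sum_smul]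
  have hsum : ∑ p ∈ Finset.range N, ((-1 : k) ^ p * (i.choose p : k))
      = if i = 0 then 1 else 0 := by
    rw [← Finset.sum_subset (Finset.range_subset_range.2 hiN)
      (fun p _ hp => by
        rw [Nat.choose_eq_zero_of_lt (by simpa using hp), Nat.cast_zero, mul_zero])]
    have := Int.alternating_sum_range_choose (n := i)
    have hc := congrArg (fun z : ℤ => (z : k)) this
    push_cast at hc
    rw [hc]
  rw [hsum]
  by_cases h0 : i = 0
  · subst h0; simp
  · simp [h0]

noncomputable def GG (a b : Module.End k V) (v : V) : ℕ → ℕ → V := fun i p =>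
  ((i ! : k)⁻¹ * ((-1 : k) ^ p * (p ! : k)⁻¹)) • (b ^ (i + p)) ((a ^ (i + p)) v)

lemma alt_choose_sum (m : ℕ) :
    ∑ x ∈ Finset.range (m + 1), ((-1 : k) ^ x * (m.choose x : k)) = if m = 0 then 1 else 0 := by
  have h := Int.alternating_sum_range_choose (n := m)
  have hc := congrArg (fun z : ℤ => (z : k)) h
  push_cast at hc
  rw [hc]

lemma QQ_taylor (h : a * b - b * a = 1) (N : ℕ) (v : V) (hv : (a ^ N) v = 0) :
    v = ∑ i ∈ Finset.range N, (i ! : k)⁻¹ • (b ^ i) ((QQ a b N) ((a ^ i) v)) := by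
  rcases Nat.eq_zero_or_pos N with rfl | hN
  · simpa using hv
  have hvm : ∀ m, N ≤ m → (a ^ m) v = 0 := by
    intro m hm
    rw [← Nat.sub_add_cancel hm, pow_add, Module.End.mul_apply, hv, map_zero]
  have hterm : ∀ i ∈ Finset.range N,
      (i ! : k)⁻¹ • (b ^ i) ((QQ a b N) ((a ^ i) v)) = ∑ p ∈ Finset.range N, GG a b v i p := by
    intro i _
    rw [QQ, LinearMap.sum_apply, map_sum, Finset.smul_sum]
    refine Finset.sum_congr rfl fun p _ => ?_
    rw [LinearMap.smul_apply, Module.End.mul_apply, map_smul, smul_smul, GG]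
    congr 1
    rw [← Module.End.mul_apply (b ^ i), ← pow_add, ← Module.End.mul_apply (a ^ p), ← pow_add,
      Nat.add_comm p i]
  have hstep2 : ∀ i ∈ Finset.range N,
      ∑ p ∈ Finset.range N, GG a b v i p = ∑ p ∈ Finset.range (N - i), GG a b v i p := by
    intro i _
    refine (Finset.sum_subset (Finset.range_subset_range.2 (Nat.sub_le N i)) ?_).symm
    intro p hp hp'
    have hip : N ≤ i + p := by
      simp only [Finset.mem_range] at hp hp'
      omega
    rw [GG]
    rw [hvm (i + p) hip, map_zero, smul_zero]
  have hinner : ∀ m ∈ Finset.range N,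
      ∑ x ∈ Finset.range (m + 1), GG a b v x (m - x) = if m = 0 then v else 0 := by
    intro m _
    have h1 : ∀ x ∈ Finset.range (m + 1), GG a b v x (m - x)
        = ((m ! : k)⁻¹ * ((-1 : k) ^ (m - x) * (m.choose x : k))) • (b ^ m) ((a ^ m) v) := by
      intro x hx
      have hx' : x ≤ m := by simpa [Nat.lt_succ_iff] using hx
      have hxm : x + (m - x) = m := Nat.add_sub_cancel' hx'
      rw [GG, hxm]
      congr 1
      have hcc : ((m.choose x : k)) * (x ! : k) * ((m - x)! : k) = (m ! : k) := by
        exact_mod_cast congrArg (Nat.cast (R := k)) (Nat.choose_mul_factorial_mul_factorial hx')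
      have hx0 : (x ! : k) ≠ 0 := Nat.cast_ne_zero.2 x.factorial_ne_zero
      have hmx0 : ((m - x)! : k) ≠ 0 := Nat.cast_ne_zero.2 (m - x).factorial_ne_zero
      have hm0 : (m ! : k) ≠ 0 := Nat.cast_ne_zero.2 m.factorial_ne_zero
      field_simp
      linear_combination -hcc
    rw [Finset.sum_congr rfl h1, ← Finset.sum_smul]
    have hneg : ∀ x ∈ Finset.range (m + 1),
        (m ! : k)⁻¹ * ((-1 : k) ^ (m - x) * (m.choose x : k))
          = ((-1 : k) ^ m * (m ! : k)⁻¹) * ((-1 : k) ^ x * (m.choose x : k)) := by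
      intro x hx
      have hx' : x ≤ m := by simpa [Nat.lt_succ_iff] using hx
      have hme : (-1 : k) ^ (m - x) = (-1 : k) ^ m * (-1 : k) ^ x := by
        have h4 : (m - x) + 2 * x = m + x := by omega
        calc (-1 : k) ^ (m - x) = (-1 : k) ^ (m - x) * ((-1 : k) ^ (2 * x)) := by
              rw [pow_mul]; norm_num
          _ = (-1 : k) ^ (m + x) := by rw [← pow_add, h4]
          _ = _ := by rw [pow_add]
      rw [hme]; ring
    rw [Finset.sum_congr rfl hneg, ← Finset.mul_sum, alt_choose_sum]
    by_cases h0 : m = 0 <;> simp [h0]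
  symm
  calc ∑ i ∈ Finset.range N, (i ! : k)⁻¹ • (b ^ i) ((QQ a b N) ((a ^ i) v))
      = ∑ i ∈ Finset.range N, ∑ p ∈ Finset.range N, GG a b v i p :=
        Finset.sum_congr rfl hterm
    _ = ∑ i ∈ Finset.range N, ∑ p ∈ Finset.range (N - i), GG a b v i p :=
        Finset.sum_congr rfl hstep2
    _ = ∑ m ∈ Finset.range N, ∑ x ∈ Finset.range (m + 1), GG a b v x (m - x) :=
        (Finset.sum_range_diag_flip N (GG a b v)).symm
    _ = ∑ m ∈ Finset.range N, (if m = 0 then v else 0) := Finset.sum_congr rfl hinner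
    _ = v := by
        rw [Finset.sum_ite_eq' (Finset.range N) 0 (fun _ => v)]
        simp [hN]


lemma key_eval (am ap bm bp : Module.End k V)
    (hab : am * bp - bp * am = 1) (hba : bm * ap - ap * bm = 1)
    (haa : am * ap = ap * am) (hbb : bm * bp = bp * bm)
    (N i j i₀ j₀ : ℕ) (hi : i < N) (hj : j < N)
    (w : V) (hwa : am w = 0) (hwb : bm w = 0) :
    (QQ bm ap N) ((QQ am bp N) ((bm ^ j₀) ((am ^ i₀) ((bp ^ i) ((ap ^ j) w)))))
      = if i = i₀ ∧ j = j₀ then ((i₀ ! * j₀ ! : ℕ) : k) • w else 0 := by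
  have hker_ap : ∀ (m : ℕ) (x : V), am x = 0 → am ((ap ^ m) x) = 0 := by
    intro m x hx
    have hc : Commute am (ap ^ m) := (show Commute am ap from haa).pow_right m
    rw [← Module.End.mul_apply, hc.eq, Module.End.mul_apply, hx, map_zero]
  have hcbm_bp : ∀ (s t : ℕ) (x : V), (bm ^ s) ((bp ^ t) x) = (bp ^ t) ((bm ^ s) x) := by
    intro s t x
    have hc : Commute (bm ^ s) (bp ^ t) := (show Commute bm bp from hbb).pow_pow s t
    rw [← Module.End.mul_apply, hc.eq, Module.End.mul_apply]
  have step1 : (am ^ i₀) ((bp ^ i) ((ap ^ j) w))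
      = ((i.descFactorial i₀ : ℕ) : k) • (bp ^ (i - i₀)) ((ap ^ j) w) :=
    apow_bpow am bp hab i₀ i _ (hker_ap j w hwa)
  have step2 : (bm ^ j₀) ((bp ^ (i - i₀)) ((ap ^ j) w))
      = ((j.descFactorial j₀ : ℕ) : k) • (bp ^ (i - i₀)) ((ap ^ (j - j₀)) w) := by
    rw [hcbm_bp, apow_bpow bm ap hba j₀ j w hwb, map_smul]
  rw [step1, map_smul, step2]
  simp only [map_smul]
  rw [QQ_bpow am bp hab N (i - i₀) _ (hker_ap (j - j₀) w hwa)
    (lt_of_le_of_lt (Nat.sub_le i i₀) hi)]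
  rcases Nat.lt_trichotomy i i₀ with hlt | heq | hgt
  · rw [Nat.descFactorial_eq_zero_iff_lt.2 hlt]
    rw [if_neg (by omega : ¬(i = i₀ ∧ j = j₀))]
    simp
  · subst heq
    rw [Nat.sub_self, if_pos rfl,
      QQ_bpow bm ap hba N (j - j₀) w hwb (lt_of_le_of_lt (Nat.sub_le j j₀) hj)]
    rcases Nat.lt_trichotomy j j₀ with hlt' | heq' | hgt'
    · rw [Nat.descFactorial_eq_zero_iff_lt.2 hlt',
        if_neg (by omega : ¬(i = i ∧ j = j₀))]
      simp
    · subst heq'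
      rw [Nat.sub_self, if_pos rfl, if_pos ⟨rfl, rfl⟩,
        Nat.descFactorial_self, Nat.descFactorial_self, smul_smul]
      push_cast
      rfl
    · rw [if_neg (by omega : ¬ j - j₀ = 0), if_neg (by omega : ¬(i = i ∧ j = j₀))]
      simp
  · rw [if_neg (by omega : ¬ i - i₀ = 0), if_neg (by omega : ¬(i = i₀ ∧ j = j₀))]
    simp

end Helpers

theorem double_heisenberg_natural_map_bijective
    {k V : Type*} [Field k] [CharZero k] [AddCommGroup V] [Module k V]
    (am ap bm bp : Module.End k V)
    (hab : am * bp - bp * am = 1) (hba : bm * ap - ap * bm = 1)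
    (haa : am * ap - ap * am = 0) (hbb : bm * bp - bp * bm = 0)
    (hmm : am * bm - bm * am = 0) (hpp : ap * bp - bp * ap = 0)
    (hanil : ∀ v : V, ∃ n : ℕ, (am ^ n) v = 0)
    (hbnil : ∀ v : V, ∃ n : ℕ, (bm ^ n) v = 0) :
    Function.Bijective
      (fun f : (ℕ × ℕ) →₀ (LinearMap.ker am ⊓ LinearMap.ker bm : Submodule k V) =>
        f.sum fun p w => (bp ^ p.1) ((ap ^ p.2) (w : V))) := by
  have haa' : am * ap = ap * am := sub_eq_zero.mp haa
  have hbb' : bm * bp = bp * bm := sub_eq_zero.mp hbb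
  have hmm' : am * bm = bm * am := sub_eq_zero.mp hmm
  have hpp' : ap * bp = bp * ap := sub_eq_zero.mp hpp
  set W : Submodule k V := (LinearMap.ker am ⊓ LinearMap.ker bm : Submodule k V) with hW
  set L : ℕ × ℕ → (W →ₗ[k] V) :=
    fun p => (bp ^ p.1 * ap ^ p.2) ∘ₗ (Submodule.subtype W) with hL
  have hFun : (fun f : (ℕ × ℕ) →₀ W =>
      f.sum fun p w => (bp ^ p.1) ((ap ^ p.2) (w : V))) = ⇑(Finsupp.lsum k L) := by
    funext f
    rw [Finsupp.lsum_apply]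
    rfl
  rw [hFun]
  constructor
  · -- injectivity
    have hcore : ∀ f : (ℕ × ℕ) →₀ W, Finsupp.lsum k L f = 0 → f = 0 := by
      intro f hf
      ext q
      set N : ℕ := ((f.support.sup fun p => p.1 + p.2) + q.1 + q.2) + 1 with hNdef
      have hsupp : ∀ p ∈ f.support, p.1 < N ∧ p.2 < N := by
        intro p hp
        have h := Finset.le_sup (f := fun p : ℕ × ℕ => p.1 + p.2) hp
        omega
      set E : Module.End k V :=
        (QQ bm ap N) ∘ₗ (QQ am bp N) ∘ₗ (bm ^ q.2) ∘ₗ (am ^ q.1) with hE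
      have h1 : E (Finsupp.lsum k L f) = 0 := by rw [hf, map_zero]
      rw [Finsupp.lsum_apply, map_finsuppSum] at h1
      have h2 : ∀ p ∈ f.support,
          E (L p (f p)) = if p = q then ((q.1 ! * q.2 ! : ℕ) : k) • ((f p : V)) else 0 := by
        intro p hp
        have hmem := (f p).2
        rw [Submodule.mem_inf] at hmem
        have hwa : am ((f p : V)) = 0 := LinearMap.mem_ker.mp hmem.1
        have hwb : bm ((f p : V)) = 0 := LinearMap.mem_ker.mp hmem.2
        have hEL : E (L p (f p)) = (QQ bm ap N) ((QQ am bp N)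
            ((bm ^ q.2) ((am ^ q.1) ((bp ^ p.1) ((ap ^ p.2) ((f p : V))))))) := rfl
        rw [hEL, key_eval am ap bm bp hab hba haa' hbb' N p.1 p.2 q.1 q.2
          (hsupp p hp).1 (hsupp p hp).2 _ hwa hwb]
        congr 1
        simp [Prod.ext_iff]
      simp only [Finsupp.sum] at h1
      rw [Finset.sum_congr rfl h2,
        Finset.sum_ite_eq' f.support q (fun p => ((q.1 ! * q.2 ! : ℕ) : k) • ((f p : V)))] at h1
      by_cases hq : q ∈ f.support
      · rw [if_pos hq] at h1
        have hc : ((q.1 ! * q.2 ! : ℕ) : k) ≠ 0 :=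
          Nat.cast_ne_zero.2 (Nat.mul_ne_zero q.1.factorial_ne_zero q.2.factorial_ne_zero)
        have hfq : ((f q : V)) = 0 := by
          rcases smul_eq_zero.mp h1 with h | h
          · exact absurd h hc
          · exact h
        simpa using hfq
      · have hfq := Finsupp.notMem_support_iff.mp hq
        simp [hfq]
    intro x y hxy
    have h0 : Finsupp.lsum k L (x - y) = 0 := by rw [map_sub, hxy, sub_self]
    have := hcore _ h0
    exact sub_eq_zero.mp this
  · -- surjectivity
    intro v
    obtain ⟨N₁, hva⟩ := hanil v
    obtain ⟨N₂, hvb⟩ := hbnil v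
    set M : ℕ := N₁ + N₂ with hM
    have hA : ∀ n, N₁ ≤ n → (am ^ n) v = 0 := by
      intro n hn
      rw [← Nat.sub_add_cancel hn, pow_add, Module.End.mul_apply, hva, map_zero]
    have hB : ∀ n, N₂ ≤ n → (bm ^ n) v = 0 := by
      intro n hn
      rw [← Nat.sub_add_cancel hn, pow_add, Module.End.mul_apply, hvb, map_zero]
    have hbm_am : ∀ (s i : ℕ) (x : V), (bm ^ s) ((am ^ i) x) = (am ^ i) ((bm ^ s) x) := by
      intro s i x
      have hc : Commute (bm ^ s) (am ^ i) := (show Commute bm am from hmm'.symm).pow_pow s i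
      rw [← Module.End.mul_apply, hc.eq, Module.End.mul_apply]
    have hbmu : ∀ (i t : ℕ), (bm ^ t) (QQ am bp (M + 1) ((am ^ i) v))
        = QQ am bp (M + 1) ((bm ^ t) ((am ^ i) v)) := by
      intro i t
      have hc : bm ^ t * QQ am bp (M + 1) = QQ am bp (M + 1) * bm ^ t :=
        ((show Commute bm (QQ am bp (M + 1)) from
          QQ_comm am bp bm hmm'.symm hbb' (M + 1)).pow_left t).eq
      calc (bm ^ t) (QQ am bp (M + 1) ((am ^ i) v))
          = (bm ^ t * QQ am bp (M + 1)) ((am ^ i) v) := rfl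
        _ = (QQ am bp (M + 1) * bm ^ t) ((am ^ i) v) := by rw [hc]
        _ = _ := rfl
    have hbmu0 : ∀ (i t : ℕ), N₂ ≤ t → (bm ^ t) (QQ am bp (M + 1) ((am ^ i) v)) = 0 := by
      intro i t ht
      rw [hbmu, hbm_am, hB t ht, map_zero, map_zero]
    have hw_am : ∀ i j : ℕ, am (QQ bm ap (M + 1) ((bm ^ j) (QQ am bp (M + 1) ((am ^ i) v)))) = 0 := by
      intro i j
      have hc : am * QQ bm ap (M + 1) = QQ bm ap (M + 1) * am := QQ_comm bm ap am hmm' haa' (M + 1)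
      have h1 : am (QQ bm ap (M + 1) ((bm ^ j) (QQ am bp (M + 1) ((am ^ i) v))))
          = QQ bm ap (M + 1) (am ((bm ^ j) (QQ am bp (M + 1) ((am ^ i) v)))) := by
        calc am (QQ bm ap (M + 1) ((bm ^ j) (QQ am bp (M + 1) ((am ^ i) v))))
            = (am * QQ bm ap (M + 1)) ((bm ^ j) (QQ am bp (M + 1) ((am ^ i) v))) := rfl
          _ = (QQ bm ap (M + 1) * am) ((bm ^ j) (QQ am bp (M + 1) ((am ^ i) v))) := by rw [hc]
          _ = _ := rfl
      have hcam : ∀ x : V, am ((bm ^ j) x) = (bm ^ j) (am x) := by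
        intro x
        have hc2 : Commute am (bm ^ j) := (show Commute am bm from hmm').pow_right j
        rw [← Module.End.mul_apply, hc2.eq, Module.End.mul_apply]
      have h2 : am (QQ am bp (M + 1) ((am ^ i) v)) = 0 := by
        have h3 := QQ_leftover am bp hab M ((am ^ i) v)
        have hz : (am ^ (M + 1)) ((am ^ i) v) = 0 := by
          rw [← Module.End.mul_apply, ← pow_add]
          exact hA (M + 1 + i) (by omega)
        rw [hz, map_zero, smul_zero] at h3
        exact h3
      rw [h1, hcam, h2, map_zero, map_zero]
    have hw_bm : ∀ i j : ℕ, bm (QQ bm ap (M + 1) ((bm ^ j) (QQ am bp (M + 1) ((am ^ i) v)))) = 0 := by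
      intro i j
      have h3 := QQ_leftover bm ap hba M ((bm ^ j) (QQ am bp (M + 1) ((am ^ i) v)))
      have hz : (bm ^ (M + 1)) ((bm ^ j) (QQ am bp (M + 1) ((am ^ i) v))) = 0 := by
        rw [← Module.End.mul_apply, ← pow_add]
        exact hbmu0 i (M + 1 + j) (by omega)
      rw [hz, map_zero, smul_zero] at h3
      exact h3
    have hmemW : ∀ i j : ℕ,
        QQ bm ap (M + 1) ((bm ^ j) (QQ am bp (M + 1) ((am ^ i) v))) ∈ W :=
      fun i j => Submodule.mem_inf.mpr
        ⟨LinearMap.mem_ker.mpr (hw_am i j), LinearMap.mem_ker.mpr (hw_bm i j)⟩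
    refine ⟨∑ p ∈ Finset.range (M + 1) ×ˢ Finset.range (M + 1),
      Finsupp.single p (((p.1 ! : k)⁻¹ * (p.2 ! : k)⁻¹) •
        (⟨QQ bm ap (M + 1) ((bm ^ p.2) (QQ am bp (M + 1) ((am ^ p.1) v))), hmemW p.1 p.2⟩ : W)), ?_⟩
    rw [map_sum]
    have hsingle : ∀ (p : ℕ × ℕ) (x : W),
        Finsupp.lsum k L (Finsupp.single p x) = L p x := by
      intro p x
      simp
    have hu_taylor : ∀ i : ℕ, QQ am bp (M + 1) ((am ^ i) v)
        = ∑ j ∈ Finset.range (M + 1), (j ! : k)⁻¹ •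
            (ap ^ j) (QQ bm ap (M + 1) ((bm ^ j) (QQ am bp (M + 1) ((am ^ i) v)))) :=
      fun i => QQ_taylor bm ap hba (M + 1) _ (hbmu0 i (M + 1) (by omega))
    have hv_taylor : v = ∑ i ∈ Finset.range (M + 1),
        (i ! : k)⁻¹ • (bp ^ i) (QQ am bp (M + 1) ((am ^ i) v)) :=
      QQ_taylor am bp hab (M + 1) v (hA (M + 1) (by omega))
    calc ∑ p ∈ Finset.range (M + 1) ×ˢ Finset.range (M + 1),
          Finsupp.lsum k L (Finsupp.single p (((p.1 ! : k)⁻¹ * (p.2 ! : k)⁻¹) •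
            (⟨QQ bm ap (M + 1) ((bm ^ p.2) (QQ am bp (M + 1) ((am ^ p.1) v))),
              hmemW p.1 p.2⟩ : W)))
        = ∑ i ∈ Finset.range (M + 1), ∑ j ∈ Finset.range (M + 1),
            ((i ! : k)⁻¹ * (j ! : k)⁻¹) •
              (bp ^ i) ((ap ^ j) (QQ bm ap (M + 1) ((bm ^ j) (QQ am bp (M + 1) ((am ^ i) v))))) := by
          rw [Finset.sum_product]
          refine Finset.sum_congr rfl fun i _ => Finset.sum_congr rfl fun j _ => ?_
          rw [hsingle, map_smul]
          rfl
      _ = ∑ i ∈ Finset.range (M + 1), (i ! : k)⁻¹ •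
            (bp ^ i) (QQ am bp (M + 1) ((am ^ i) v)) := by
          refine Finset.sum_congr rfl fun i _ => ?_
          conv_rhs => rw [hu_taylor i]
          rw [map_sum, Finset.smul_sum]
          refine Finset.sum_congr rfl fun j _ => ?_
          rw [map_smul, smul_smul]
      _ = v := hv_taylor.symm
end

section
/- Let V be a vector space over a field k of characteristic 0, and let μ₋, μ₊ ∈ End(V) satisfy [μ₋, μ₊] = id with μ₋ locally nilpotent. Then μ₊ is injective. -/
theorem heisenberg_mu_plus_injective
    {k V : Type*} [Field k] [CharZero k] [AddCommGroup V] [Module k V]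
    (μm μp : Module.End k V) (h : μm * μp - μp * μm = 1)
    (hnil : ∀ v : V, ∃ n : ℕ, (μm ^ n) v = 0) :
    Function.Injective μp := by
  have hcomm : μm * μp = μp * μm + 1 := by rw [← h]; noncomm_ring
  have key : ∀ n : ℕ, μm ^ (n + 1) * μp
      = μp * μm ^ (n + 1) + ((n : k) + 1) • μm ^ n := by
    intro n
    induction n with
    | zero => simpa using hcomm
    | succ n ih =>
      calc μm ^ (n + 2) * μp = μm * (μm ^ (n + 1) * μp) := by
              rw [← mul_assoc, ← pow_succ' μm (n + 1)]
        _ = μm * (μp * μm ^ (n + 1) + ((n : k) + 1) • μm ^ n) := by rw [ih]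
        _ = (μm * μp) * μm ^ (n + 1) + ((n : k) + 1) • μm ^ (n + 1) := by
              rw [mul_add, mul_smul_comm, mul_assoc, ← pow_succ' μm n]
        _ = (μp * μm + 1) * μm ^ (n + 1) + ((n : k) + 1) • μm ^ (n + 1) := by rw [hcomm]
        _ = μp * μm ^ (n + 2) + (((n + 1 : ℕ) : k) + 1) • μm ^ (n + 1) := by
              rw [add_mul, one_mul, mul_assoc, ← pow_succ' μm (n + 1)]
              push_cast
              module
  have main : ∀ n : ℕ, ∀ v : V, μp v = 0 → (μm ^ n) v = 0 → v = 0 := by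
    intro n
    induction n with
    | zero => intro v _ hv; simpa using hv
    | succ n ih =>
      intro v hpv hv
      have h1 : (μm ^ (n + 1) * μp) v = 0 := by
        simp [Module.End.mul_apply, hpv]
      rw [key n] at h1
      have h2 : μp ((μm ^ (n + 1)) v) + ((n : k) + 1) • (μm ^ n) v = 0 := by
        simpa [Module.End.mul_apply] using h1
      rw [hv, map_zero, zero_add] at h2
      have hne : ((n : k) + 1) ≠ 0 := by
        exact_mod_cast Nat.cast_add_one_ne_zero (R := k) n
      have h3 : (μm ^ n) v = 0 := by
        rcases smul_eq_zero.mp h2 with hc | hc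
        · exact absurd hc hne
        · exact hc
      exact ih v hpv h3
  intro a b hab
  have : μp (a - b) = 0 := by simp [map_sub, hab]
  obtain ⟨n, hn⟩ := hnil (a - b)
  have := main n (a - b) this hn
  exact sub_eq_zero.mp this
end

section
/- Let V be a vector space over a field k of characteristic 0, and let a₋, a₊, b₋, b₊ ∈ End(V) with [a₋, b₊] = [b₋, a₊] = id and all other pairs commuting, a₋ and b₋ locally nilpotent. Then the natural map ker a₋ ∩ ker b₋ → V/(im a₊ + im b₊) induced by inclusion followed by the quotient map is an isomorphism. -/
open Finset

section dh
variable {k V : Type*} [Field k] [CharZero k] [AddCommGroup V] [Module k V]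

noncomputable def dhc (k : Type*) [Field k] (j : ℕ) : k := (-1)^j / j.factorial

noncomputable def dhS (f g : Module.End k V) (n : ℕ) : Module.End k V :=
  ∑ j ∈ Finset.range n, dhc k j • (g^j * f^j)

lemma dhc_zero : dhc k 0 = 1 := by simp [dhc]

lemma dhc_succ_mul (j : ℕ) : dhc k (j+1) * ((j : k)+1) = - dhc k j := by
  have h1 : ((j.factorial : k)) ≠ 0 := Nat.cast_ne_zero.2 j.factorial_ne_zero
  have h2 : ((j : k) + 1) ≠ 0 := by
    have := Nat.cast_add_one_ne_zero (R := k) j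
    simpa using this
  simp only [dhc, Nat.factorial_succ, pow_succ]
  push_cast
  field_simp

lemma dh_tele {M : Type*} [AddCommGroup M] (u t : ℕ → M) (h0 : t 0 = u 0)
    (hs : ∀ j, t (j+1) = u (j+1) - u j) (n : ℕ) :
    ∑ j ∈ Finset.range (n+1), t j = u n := by
  rw [Finset.sum_range_succ']
  simp only [hs, h0, Finset.sum_range_sub]
  abel

lemma dhL1 (f g : Module.End k V) (hfg : f*g - g*f = 1) (j : ℕ) :
    f * g^(j+1) = g^(j+1) * f + ((j : k)+1) • g^j := by
  have hfg' : f * g = g * f + 1 := by rw [← hfg]; noncomm_ring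
  induction j with
  | zero => simpa using hfg'
  | succ j ih =>
      have : f * g^(j+2) = (f * g^(j+1)) * g := by rw [mul_assoc, ← pow_succ]
      rw [this, ih, add_mul, smul_mul_assoc, ← pow_succ, mul_assoc, hfg',
        mul_add, mul_one, ← mul_assoc, ← pow_succ]
      push_cast
      module

lemma dhL2 (f g : Module.End k V) (hfg : f*g - g*f = 1) (j : ℕ) :
    f^(j+1) * g = g * f^(j+1) + ((j : k)+1) • f^j := by
  have hfg' : f * g = g * f + 1 := by rw [← hfg]; noncomm_ring
  induction j with
  | zero => simpa using hfg'
  | succ j ih =>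
      have : f^(j+2) * g = f * (f^(j+1) * g) := by rw [← mul_assoc, ← pow_succ']
      rw [this, ih, mul_add, ← mul_assoc, hfg', mul_smul_comm, ← pow_succ',
        add_mul, one_mul, mul_assoc, ← pow_succ']
      push_cast
      module

lemma dhL3 (f g : Module.End k V) (hfg : f*g - g*f = 1) (n : ℕ) :
    f * dhS f g (n+1) = dhc k n • (g^n * f^(n+1)) := by
  unfold dhS
  rw [Finset.mul_sum]
  refine dh_tele (fun j => dhc k j • (g^j * f^(j+1))) _ ?_ ?_ n
  · simp [dhc_zero]
  · intro j
    rw [mul_smul_comm, ← mul_assoc, dhL1 f g hfg j, add_mul, smul_mul_assoc,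
      mul_assoc, ← pow_succ', smul_add, smul_smul, dhc_succ_mul, neg_smul]
    simp [sub_eq_add_neg]

lemma dhL4 (f g : Module.End k V) (hfg : f*g - g*f = 1) (n : ℕ) :
    dhS f g (n+1) * g = dhc k n • (g^(n+1) * f^n) := by
  unfold dhS
  rw [Finset.sum_mul]
  refine dh_tele (fun j => dhc k j • (g^(j+1) * f^j)) _ ?_ ?_ n
  · simp [dhc_zero]
  · intro j
    rw [smul_mul_assoc, mul_assoc, dhL2 f g hfg j, mul_add, ← mul_assoc,
      ← pow_succ, mul_smul_comm, smul_add, smul_smul, dhc_succ_mul, neg_smul]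
    simp [sub_eq_add_neg]

lemma dhL5 (f g h : Module.End k V) (hf : h * f = f * h) (hg : h * g = g * h) (n : ℕ) :
    h * dhS f g n = dhS f g n * h := by
  unfold dhS
  rw [Finset.mul_sum, Finset.sum_mul]
  refine Finset.sum_congr rfl fun j _ => ?_
  have hf' : h * f^j = f^j * h := (Commute.pow_right hf j)
  have hg' : h * g^j = g^j * h := (Commute.pow_right hg j)
  rw [mul_smul_comm, smul_mul_assoc]
  congr 1
  rw [← mul_assoc, hg', mul_assoc, hf', mul_assoc]

lemma dhL7 (f g : Module.End k V) (n : ℕ) (v : V) (hv : f v = 0) :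
    dhS f g (n+1) v = v := by
  unfold dhS
  rw [LinearMap.sum_apply, Finset.sum_range_succ']
  have : ∀ j, (dhc k (j+1) • (g^(j+1) * f^(j+1))) v = 0 := by
    intro j
    have : (f^(j+1)) v = 0 := by rw [pow_succ, Module.End.mul_apply, hv, map_zero]
    simp [Module.End.mul_apply, this]
  simp [this, dhc_zero]

lemma dhL8 (f g : Module.End k V) (n : ℕ) (v : V) :
    v - dhS f g (n+1) v ∈ LinearMap.range g := by
  unfold dhS
  rw [LinearMap.sum_apply, Finset.sum_range_succ']
  have h0 : (dhc k 0 • ((g:Module.End k V)^0 * f^0)) v = v := by simp [dhc_zero]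
  rw [h0]
  have : v - (∑ j ∈ Finset.range n, (dhc k (j+1) • (g^(j+1) * f^(j+1))) v + v)
      = - ∑ j ∈ Finset.range n, (dhc k (j+1) • (g^(j+1) * f^(j+1))) v := by abel
  rw [this]
  refine Submodule.neg_mem _ (Submodule.sum_mem _ fun j _ => ?_)
  refine ⟨dhc k (j+1) • (g^j * f^(j+1)) v, ?_⟩
  simp [Module.End.mul_apply, pow_succ', LinearMap.smul_apply, map_smul]

end dh

section main
variable {k V : Type*} [Field k] [CharZero k] [AddCommGroup V] [Module k V]

lemma dh_pow_zero (f : Module.End k V) {n m : ℕ} (h : n ≤ m) {v : V}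
    (hv : (f^n) v = 0) : (f^m) v = 0 := by
  obtain ⟨d, rfl⟩ := Nat.exists_eq_add_of_le h
  rw [add_comm, pow_add, Module.End.mul_apply, hv, map_zero]

lemma dh_key_inj (am ap bm bp : Module.End k V)
    (hab : am * bp - bp * am = 1) (hba : bm * ap - ap * bm = 1)
    (haa : am * ap - ap * am = 0) (hbb : bm * bp - bp * bm = 0)
    (hmm : am * bm - bm * am = 0) (hpp : ap * bp - bp * ap = 0)
    (hanil : ∀ v : V, ∃ n : ℕ, (am ^ n) v = 0)
    (hbnil : ∀ v : V, ∃ n : ℕ, (bm ^ n) v = 0)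
    (v : V) (hva : am v = 0) (hvb : bm v = 0)
    (hv : v ∈ LinearMap.range ap ⊔ LinearMap.range bp) : v = 0 := by
  rw [Submodule.mem_sup] at hv
  obtain ⟨x, hx, y, hy, hxy⟩ := hv
  obtain ⟨x0, rfl⟩ := hx
  obtain ⟨y0, rfl⟩ := hy
  obtain ⟨n1, hn1⟩ := hanil x0
  obtain ⟨n2, hn2⟩ := hanil y0
  set N := max n1 n2 with hN
  have hx0 : (am^N) x0 = 0 := dh_pow_zero am (le_max_left _ _) hn1
  have hy0 : (am^N) y0 = 0 := dh_pow_zero am (le_max_right _ _) hn2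
  set P := dhS am bp (N+1) with hP
  have h1 : P v = v := dhL7 am bp N v hva
  have h2 : P (bp y0) = 0 := by
    have := congrArg (fun (T : Module.End k V) => T y0) (dhL4 am bp hab N)
    simp only [Module.End.mul_apply, LinearMap.smul_apply] at this
    rw [hP, this, hy0, map_zero, smul_zero]
  have h3 : P (ap x0) = ap (P x0) := by
    have hc : ap * P = P * ap := by
      refine dhL5 am bp ap ?_ ?_ (N+1)
      · exact (sub_eq_zero.1 haa).symm
      · exact sub_eq_zero.1 hpp
    have := congrArg (fun (T : Module.End k V) => T x0) hc
    simpa only [Module.End.mul_apply] using this.symm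
  have h4 : v = ap (P x0) := by
    rw [← h1, ← hxy, map_add, h2, add_zero, h3]
  obtain ⟨M, hM⟩ := hbnil (P x0)
  set Q := dhS bm ap (M+1) with hQ
  have h5 : Q v = v := dhL7 bm ap M v hvb
  have h6 : Q (ap (P x0)) = 0 := by
    have := congrArg (fun (T : Module.End k V) => T (P x0)) (dhL4 bm ap hba M)
    simp only [Module.End.mul_apply, LinearMap.smul_apply] at this
    rw [hQ, this, hM, map_zero, smul_zero]
  rw [← h5, h4, h6]

lemma dh_key_surj (am ap bm bp : Module.End k V)
    (hab : am * bp - bp * am = 1) (hba : bm * ap - ap * bm = 1)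
    (haa : am * ap - ap * am = 0) (hbb : bm * bp - bp * bm = 0)
    (hmm : am * bm - bm * am = 0) (hpp : ap * bp - bp * ap = 0)
    (hanil : ∀ v : V, ∃ n : ℕ, (am ^ n) v = 0)
    (hbnil : ∀ v : V, ∃ n : ℕ, (bm ^ n) v = 0)
    (v : V) : ∃ w : V, am w = 0 ∧ bm w = 0 ∧
      v - w ∈ LinearMap.range ap ⊔ LinearMap.range bp := by
  obtain ⟨n, hn⟩ := hanil v
  set P := dhS am bp (n+1) with hP
  set u := P v with hu
  have hau : am u = 0 := by
    have := congrArg (fun (T : Module.End k V) => T v) (dhL3 am bp hab n)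
    simp only [Module.End.mul_apply, LinearMap.smul_apply] at this
    have hz : (am^(n+1)) v = 0 := by
      rw [pow_succ', Module.End.mul_apply, hn, map_zero]
    rw [hu, hP, this, hz, map_zero, smul_zero]
  have hvu : v - u ∈ LinearMap.range bp := dhL8 am bp n v
  obtain ⟨m, hm⟩ := hbnil u
  set Q := dhS bm ap (m+1) with hQ
  set w := Q u with hw
  have hbw : bm w = 0 := by
    have := congrArg (fun (T : Module.End k V) => T u) (dhL3 bm ap hba m)
    simp only [Module.End.mul_apply, LinearMap.smul_apply] at this
    have hz : (bm^(m+1)) u = 0 := by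
      rw [pow_succ', Module.End.mul_apply, hm, map_zero]
    rw [hw, hQ, this, hz, map_zero, smul_zero]
  have haw : am w = 0 := by
    have hc : am * Q = Q * am := by
      refine dhL5 bm ap am ?_ ?_ (m+1)
      · exact sub_eq_zero.1 hmm
      · exact sub_eq_zero.1 haa
    have := congrArg (fun (T : Module.End k V) => T u) hc
    simp only [Module.End.mul_apply] at this
    rw [hw, this, hau, map_zero]
  have huw : u - w ∈ LinearMap.range ap := dhL8 bm ap m u
  refine ⟨w, haw, hbw, ?_⟩
  have : v - w = (v - u) + (u - w) := by abel
  rw [this]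
  exact Submodule.add_mem _ (Submodule.mem_sup_right hvu) (Submodule.mem_sup_left huw)

end main

theorem double_heisenberg_ker_to_coker_bijective
    {k V : Type*} [Field k] [CharZero k] [AddCommGroup V] [Module k V]
    (am ap bm bp : Module.End k V)
    (hab : am * bp - bp * am = 1) (hba : bm * ap - ap * bm = 1)
    (haa : am * ap - ap * am = 0) (hbb : bm * bp - bp * bm = 0)
    (hmm : am * bm - bm * am = 0) (hpp : ap * bp - bp * ap = 0)
    (hanil : ∀ v : V, ∃ n : ℕ, (am ^ n) v = 0)
    (hbnil : ∀ v : V, ∃ n : ℕ, (bm ^ n) v = 0) :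
    Function.Bijective
      (fun w : (LinearMap.ker am ⊓ LinearMap.ker bm : Submodule k V) =>
        Submodule.Quotient.mk (p := LinearMap.range ap ⊔ LinearMap.range bp)
          (w : V)) := by
  constructor
  · intro w1 w2 h
    simp only [Submodule.Quotient.eq] at h
    have hmem := w1.2
    have hmem2 := w2.2
    rw [Submodule.mem_inf] at hmem hmem2
    have h0 : ((w1 : V) - (w2 : V)) = 0 := by
      refine dh_key_inj am ap bm bp hab hba haa hbb hmm hpp hanil hbnil _ ?_ ?_ h
      · rw [map_sub, (LinearMap.mem_ker).1 hmem.1, (LinearMap.mem_ker).1 hmem2.1, sub_zero]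
      · rw [map_sub, (LinearMap.mem_ker).1 hmem.2, (LinearMap.mem_ker).1 hmem2.2, sub_zero]
    exact Subtype.ext (sub_eq_zero.1 h0)
  · intro q
    obtain ⟨v, rfl⟩ := Submodule.Quotient.mk_surjective _ q
    obtain ⟨w, haw, hbw, hvw⟩ :=
      dh_key_surj am ap bm bp hab hba haa hbb hmm hpp hanil hbnil v
    refine ⟨⟨w, Submodule.mem_inf.2 ⟨LinearMap.mem_ker.2 haw, LinearMap.mem_ker.2 hbw⟩⟩, ?_⟩
    simp only [Submodule.Quotient.eq]
    have : w - v = -(v - w) := by abel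
    rw [this]
    exact Submodule.neg_mem _ hvw
end
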